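/- arXiv:math/0303227 — 2 statements merged into one kernel-verified Lean document; each statement's English description precedes it below -/
import Mathlib

section
/- Let s ∈ (0, d). Let (q_i) be a sequence of positive integers with q_{i+1} ≥ q_i^i and q_1 ≥ 2. Let E_i = {x ∈ [0,1]^d : |x_j − p_j/q_i| ≤ q_i^{−d/s} for some integers p_j, for each j = 1,…,d}, and E = ⋂_{i≥1} E_i. Then the Hausdorff dimension of E is at most s, and moreover for any bounded symmetric convex body K, the K-distance set Δ_K(E) has Hausdorff dimension at most s; in particular if s < 1 then Δ_K(E) has Lebesgue measure zero. -/
open MeasureTheory Set Filter EMetric Topology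
open scoped ENNReal NNReal

lemma dimH_le_of_covers {X : Type*} [EMetricSpace X] [MeasurableSpace X] [BorelSpace X]
    (S : Set X) (s : ℝ) (hs : 0 ≤ s)
    (ι : ℕ → Type) [inst : ∀ n, Fintype (ι n)]
    (U : ∀ n, ι n → Set X) (δ : ℕ → ℝ≥0∞)
    (hδ : Tendsto δ atTop (𝓝 0))
    (hdiam : ∀ᶠ n in atTop, ∀ i, EMetric.diam (U n i) ≤ δ n)
    (hcov : ∀ᶠ n in atTop, S ⊆ ⋃ i, U n i)
    (hsum : ∀ t : ℝ, s < t →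
      Tendsto (fun n => (Fintype.card (ι n) : ℝ≥0∞) * δ n ^ t) atTop (𝓝 0)) :
    dimH S ≤ ENNReal.ofReal s := by
  refine dimH_le fun d' hd' => ?_
  by_contra hlt
  push_neg at hlt
  have hd'0 : (0:ℝ) < (d' : ℝ) := by
    rcases eq_or_lt_of_le (zero_le : (0 : ℝ≥0) ≤ d') with h | h
    · exfalso; rw [← h] at hlt; simpa using hlt
    · exact_mod_cast h
  have hst : s < (d' : ℝ) := by
    by_contra hge
    push_neg at hge
    have : (d' : ℝ≥0∞) ≤ ENNReal.ofReal s := by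
      rw [← ENNReal.ofReal_coe_nnreal]
      exact ENNReal.ofReal_le_ofReal hge
    exact absurd this (not_le_of_gt hlt)
  have key : μH[(d' : ℝ)] S ≤ liminf (fun n => ∑ i : ι n, EMetric.diam (U n i) ^ (d' : ℝ)) atTop :=
    MeasureTheory.Measure.hausdorffMeasure_le_liminf_sum _ S δ hδ U hdiam hcov
  have hle : ∀ᶠ n in atTop, (∑ i : ι n, EMetric.diam (U n i) ^ (d' : ℝ)) ≤
      (Fintype.card (ι n) : ℝ≥0∞) * δ n ^ (d' : ℝ) := by
    filter_upwards [hdiam] with n hn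
    calc (∑ i : ι n, EMetric.diam (U n i) ^ (d' : ℝ))
        ≤ ∑ _i : ι n, δ n ^ (d' : ℝ) :=
          Finset.sum_le_sum fun i _ => ENNReal.rpow_le_rpow (hn i) hd'0.le
      _ = (Fintype.card (ι n) : ℝ≥0∞) * δ n ^ (d' : ℝ) := by
          simp [Finset.sum_const, nsmul_eq_mul, Finset.card_univ]
  have h0 : liminf (fun n => ∑ i : ι n, EMetric.diam (U n i) ^ (d' : ℝ)) atTop = 0 := by
    have h1 : liminf (fun n => ∑ i : ι n, EMetric.diam (U n i) ^ (d' : ℝ)) atTop ≤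
        liminf (fun n => (Fintype.card (ι n) : ℝ≥0∞) * δ n ^ (d' : ℝ)) atTop :=
      liminf_le_liminf hle
    rw [(hsum _ hst).liminf_eq] at h1
    exact le_antisymm h1 zero_le
  rw [h0] at key
  exact absurd key (by simp [hd'])

lemma box_diam {d : ℕ} (c : Fin d → ℝ) (r : ℝ) :
    EMetric.diam {x : EuclideanSpace ℝ (Fin d) | ∀ j, |x j - c j| ≤ r} ≤
      ENNReal.ofReal (2 * Real.sqrt d * r) := by
  rcases le_or_gt r 0 with hr | hr
  · rcases eq_empty_or_nonempty {x : EuclideanSpace ℝ (Fin d) | ∀ j, |x j - c j| ≤ r} with h | h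
    · simp [h, EMetric.diam]
    ·
      refine EMetric.diam_le fun x hx y hy => ?_
      have hxy : x = y := by
        ext j
        have h1 := hx j; have h2 := hy j
        have : |x j - y j| ≤ 2 * r := by
          have := abs_sub_abs_le_abs_sub (x j - c j) (y j - c j)
          calc |x j - y j| = |(x j - c j) - (y j - c j)| := by ring_nf
            _ ≤ |x j - c j| + |y j - c j| := abs_sub _ _
            _ ≤ 2 * r := by linarith
        have h0 : |x j - y j| = 0 := le_antisymm (by linarith) (abs_nonneg _)
        have := abs_eq_zero.mp h0; linarith
      simp [hxy]
  refine EMetric.diam_le fun x hx y hy => ?_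
  rw [edist_dist]
  refine ENNReal.ofReal_le_ofReal ?_
  have hdist : dist x y ≤ Real.sqrt ((d : ℝ) * (2 * r) ^ 2) := by
    rw [EuclideanSpace.dist_eq]
    refine Real.sqrt_le_sqrt ?_
    calc (∑ j, dist (x j) (y j) ^ 2) ≤ ∑ _j : Fin d, (2 * r) ^ 2 := by
          refine Finset.sum_le_sum fun j _ => ?_
          have hb : dist (x j) (y j) ≤ 2 * r := by
            have h1 := hx j; have h2 := hy j
            rw [Real.dist_eq]
            calc |x j - y j| = |(x j - c j) - (y j - c j)| := by ring_nf
              _ ≤ |x j - c j| + |y j - c j| := abs_sub _ _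
              _ ≤ 2 * r := by linarith
          exact pow_le_pow_left₀ dist_nonneg hb 2
      _ = (d : ℝ) * (2 * r) ^ 2 := by simp [Finset.sum_const, nsmul_eq_mul]
  calc dist x y ≤ Real.sqrt ((d : ℝ) * (2 * r) ^ 2) := hdist
    _ = Real.sqrt d * (2 * r) := by
        rw [Real.sqrt_mul (Nat.cast_nonneg d), Real.sqrt_sq (by linarith)]
    _ = 2 * Real.sqrt d * r := by ring

lemma tendsto_poly_rpow (Q : ℕ → ℝ) (hQ : Tendsto Q atTop atTop) (d : ℕ)
    (α β b u : ℝ) (hu : (d : ℝ) < u) (hb : 0 ≤ b) (hα : 0 < α) (hβ : 0 ≤ β) :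
    Tendsto (fun n => (α * Q n + β) ^ d * (b * Q n ^ (-u))) atTop (𝓝 0) := by
  have hg : Tendsto (fun n => (α + β) ^ d * b * Q n ^ ((d : ℝ) - u)) atTop (𝓝 0) := by
    have h1 : Tendsto (fun x : ℝ => x ^ ((d : ℝ) - u)) atTop (𝓝 0) := by
      have := tendsto_rpow_neg_atTop (y := u - (d : ℝ)) (by linarith)
      simpa [neg_sub] using this
    have := (h1.comp hQ).const_mul ((α + β) ^ d * b)
    simpa [mul_assoc] using this
  refine squeeze_zero' ?_ ?_ hg
  · filter_upwards [hQ.eventually_ge_atTop 1] with n hn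
    have hQ0 : (0:ℝ) < Q n := lt_of_lt_of_le one_pos hn
    positivity
  · filter_upwards [hQ.eventually_ge_atTop 1] with n hn
    have hQ0 : (0:ℝ) < Q n := lt_of_lt_of_le one_pos hn
    have hbound : α * Q n + β ≤ (α + β) * Q n := by nlinarith
    have h1 : (α * Q n + β) ^ d ≤ ((α + β) * Q n) ^ d :=
      pow_le_pow_left₀ (by positivity) hbound d
    have h2 : ((α + β) * Q n) ^ d * (b * Q n ^ (-u)) =
        (α + β) ^ d * b * Q n ^ ((d : ℝ) - u) := by
      rw [mul_pow, sub_eq_add_neg, Real.rpow_add hQ0, Real.rpow_natCast]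
      ring
    calc (α * Q n + β) ^ d * (b * Q n ^ (-u)) ≤ ((α + β) * Q n) ^ d * (b * Q n ^ (-u)) := by
          have : (0:ℝ) ≤ b * Q n ^ (-u) := by positivity
          exact mul_le_mul_of_nonneg_right h1 this
      _ = (α + β) ^ d * b * Q n ^ ((d : ℝ) - u) := h2

lemma euclid_norm_le {d : ℕ} (w : EuclideanSpace ℝ (Fin d)) (r : ℝ) (hr : 0 ≤ r)
    (h : ∀ j, |w j| ≤ r) : ‖w‖ ≤ Real.sqrt d * r := by
  rw [EuclideanSpace.norm_eq]
  calc Real.sqrt (∑ j, ‖w j‖ ^ 2) ≤ Real.sqrt ((d : ℝ) * r ^ 2) := by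
        refine Real.sqrt_le_sqrt ?_
        calc (∑ j, ‖w j‖ ^ 2) ≤ ∑ _j : Fin d, r ^ 2 :=
              Finset.sum_le_sum fun j _ => pow_le_pow_left₀ (norm_nonneg _) (h j) 2
          _ = (d : ℝ) * r ^ 2 := by simp [Finset.sum_const, nsmul_eq_mul]
    _ = Real.sqrt d * r := by
        rw [Real.sqrt_mul (Nat.cast_nonneg d), Real.sqrt_sq hr]


/-- The `K`-distance set. -/
def distSet {d : ℕ} (K E : Set (EuclideanSpace ℝ (Fin d))) : Set ℝ :=
  {r : ℝ | ∃ x ∈ E, ∃ y ∈ E, gauge K (x - y) = r}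

lemma distSet_aux (d : ℕ) (hd : 0 < d) (s : ℝ) (hs0 : 0 < s) (hsd : s < d)
    (q : ℕ → ℕ) (hqpos : ∀ i, 0 < q i) (E : Set (EuclideanSpace ℝ (Fin d)))
    (r : ℕ → ℝ) (hrdef : r = fun n => (q n : ℝ) ^ (-(d : ℝ) / s))
    (hr0 : ∀ n, 0 ≤ r n)
    (hrtend : Tendsto r atTop (𝓝 0))
    (hqtop : Tendsto (fun n => (q n : ℝ)) atTop atTop)
    (hlat : ∀ n, 1 ≤ n → ∀ x ∈ E, ∃ p : Fin d → ℤ,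
      (∀ j, |x j - (p j : ℝ) / q n| ≤ r n) ∧ ∀ j, -1 ≤ p j ∧ p j ≤ (q n : ℤ) + 1)
    (K : Set (EuclideanSpace ℝ (Fin d))) (hKc : Convex ℝ K) (hKs : K = -K)
    (hK0 : (0 : EuclideanSpace ℝ (Fin d)) ∈ interior K) :
    dimH (distSet K E) ≤ ENNReal.ofReal s ∧ (s < 1 → volume (distSet K E) = 0) := by
  have hd' : 0 < d := hd
  obtain ⟨ρ, hρ0, hball⟩ := Metric.mem_nhds_iff.mp (isOpen_interior.mem_nhds hK0)
  have hballK : Metric.ball (0 : EuclideanSpace ℝ (Fin d)) ρ ⊆ K :=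
    hball.trans interior_subset
  have hKabs : Absorbent ℝ K := absorbent_nhds_zero (mem_interior_iff_mem_nhds.mp hK0)
  have hgaugeb : ∀ w : EuclideanSpace ℝ (Fin d), gauge K w ≤ ‖w‖ / ρ := fun w =>
    le_trans (gauge_mono (absorbent_nhds_zero (Metric.ball_mem_nhds 0 hρ0)) hballK w)
      (le_of_eq (gauge_ball hρ0.le w))
  have hsymm : ∀ z ∈ K, -z ∈ K := by
    intro z hz
    rw [hKs]
    exact Set.neg_mem_neg.mpr hz
  have hgauge_diff : ∀ a b : EuclideanSpace ℝ (Fin d),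
      |gauge K a - gauge K b| ≤ gauge K (a - b) := by
    intro a b
    rw [abs_sub_le_iff]
    constructor
    · have h1 : gauge K a ≤ gauge K b + gauge K (a - b) := by
        have := gauge_add_le hKc hKabs b (a - b)
        simpa using this
      linarith
    · have h1 : gauge K b ≤ gauge K a + gauge K (b - a) := by
        have := gauge_add_le hKc hKabs a (b - a)
        simpa using this
      have h2 : gauge K (b - a) = gauge K (a - b) := by
        rw [← neg_sub a b, gauge_neg hsymm]
      linarith
  have hdim : dimH (distSet K E) ≤ ENNReal.ofReal s := by
    refine dimH_le_of_covers (distSet K E) s hs0.le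
      (fun n => Fin d → Fin (2 * q n + 5))
      (fun n κ => Set.Icc
        (gauge K (WithLp.toLp 2 (fun j => (((κ j : ℕ) : ℝ) - ((q n : ℝ) + 2)) / q n)) -
          2 * Real.sqrt d * r n / ρ)
        (gauge K (WithLp.toLp 2 (fun j => (((κ j : ℕ) : ℝ) - ((q n : ℝ) + 2)) / q n)) +
          2 * Real.sqrt d * r n / ρ))
      (fun n => ENNReal.ofReal (2 * (2 * Real.sqrt d / ρ) * r n)) ?_ ?_ ?_ ?_
    · have : Tendsto (fun n => 2 * (2 * Real.sqrt d / ρ) * r n) atTop (𝓝 0) := by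
        simpa using hrtend.const_mul (2 * (2 * Real.sqrt d / ρ))
      have := ENNReal.tendsto_ofReal this
      simpa using this
    · filter_upwards with n κ
      rw [EMetric.diam, Real.ediam_Icc]
      refine ENNReal.ofReal_le_ofReal (le_of_eq ?_)
      ring
    · filter_upwards [eventually_ge_atTop 1] with n hn
      rintro z ⟨x, hx, y, hy, hz⟩
      obtain ⟨p, hp, hpb⟩ := hlat n hn x hx
      obtain ⟨p', hp', hpb'⟩ := hlat n hn y hy
      have hq0 : (0:ℝ) < q n := by exact_mod_cast hqpos n
      have hbd : ∀ j, (p j - p' j + ((q n : ℤ) + 2)).toNat < 2 * q n + 5 := by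
        intro j
        have h1 := (hpb j).1; have h2 := (hpb j).2
        have h3 := (hpb' j).1; have h4 := (hpb' j).2
        omega
      set v : EuclideanSpace ℝ (Fin d) := WithLp.toLp 2 (fun j =>
        ((((p j - p' j + ((q n : ℤ) + 2)).toNat : ℕ) : ℝ) - ((q n : ℝ) + 2)) / q n) with hv
      have hvj : ∀ j, v j = ((p j : ℝ) - (p' j : ℝ)) / q n := by
        intro j
        have h1 := (hpb j).1; have h3 := (hpb' j).2
        have hnn : (0:ℤ) ≤ p j - p' j + ((q n : ℤ) + 2) := by omega
        have h2 : ((p j - p' j + ((q n : ℤ) + 2)).toNat : ℤ) =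
            p j - p' j + ((q n : ℤ) + 2) := Int.toNat_of_nonneg hnn
        have h3' := congrArg (fun z : ℤ => (z : ℝ)) h2
        push_cast at h3'
        show ((((p j - p' j + ((q n : ℤ) + 2)).toNat : ℕ) : ℝ) - ((q n : ℝ) + 2)) / q n = _
        rw [h3']
        ring
      have hwb : ∀ j, |(x - y - v) j| ≤ 2 * r n := by
        intro j
        have hxy : (x - y - v) j = (x j - (p j : ℝ) / q n) - (y j - (p' j : ℝ) / q n) := by
          simp only [PiLp.sub_apply, hvj j]
          rw [sub_div]
          ring
        rw [hxy]
        calc |(x j - (p j : ℝ) / q n) - (y j - (p' j : ℝ) / q n)| ≤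
            |x j - (p j : ℝ) / q n| + |y j - (p' j : ℝ) / q n| := abs_sub _ _
          _ ≤ 2 * r n := by linarith [hp j, hp' j]
      have hnorm : ‖x - y - v‖ ≤ Real.sqrt d * (2 * r n) :=
        euclid_norm_le _ _ (by linarith [hr0 n]) hwb
      have hest : |gauge K (x - y) - gauge K v| ≤ 2 * Real.sqrt d * r n / ρ := by
        calc |gauge K (x - y) - gauge K v| ≤ gauge K (x - y - v) := hgauge_diff _ _
          _ ≤ ‖x - y - v‖ / ρ := hgaugeb _
          _ ≤ Real.sqrt d * (2 * r n) / ρ := by gcongr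
          _ = 2 * Real.sqrt d * r n / ρ := by ring
      have habs := abs_le.mp hest
      refine Set.mem_iUnion.mpr ⟨fun j => ⟨(p j - p' j + ((q n : ℤ) + 2)).toNat, hbd j⟩, ?_⟩
      show z ∈ Set.Icc (gauge K v - 2 * Real.sqrt d * r n / ρ)
        (gauge K v + 2 * Real.sqrt d * r n / ρ)
      constructor
      · rw [← hz]; linarith [habs.1]
      · rw [← hz]; linarith [habs.2]
    · intro t ht
      have hu : (d : ℝ) < t * d / s := by
        rw [lt_div_iff₀ hs0]
        have : (0:ℝ) < d := by exact_mod_cast hd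
        nlinarith
      have hC : (0:ℝ) ≤ 2 * (2 * Real.sqrt d / ρ) := by
        have : (0:ℝ) ≤ 2 * Real.sqrt d / ρ := div_nonneg (by positivity) hρ0.le
        linarith
      have hreal : Tendsto (fun n => (2 * (q n : ℝ) + 5) ^ d *
          ((2 * (2 * Real.sqrt d / ρ)) ^ t * (q n : ℝ) ^ (-(t * d / s)))) atTop (𝓝 0) :=
        tendsto_poly_rpow _ hqtop d 2 5 _ _ hu (Real.rpow_nonneg hC t) two_pos (by norm_num)
      have heq : ∀ n, (Fintype.card (Fin d → Fin (2 * q n + 5)) : ℝ≥0∞) *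
          (ENNReal.ofReal (2 * (2 * Real.sqrt d / ρ) * r n)) ^ t =
          ENNReal.ofReal ((2 * (q n : ℝ) + 5) ^ d *
            ((2 * (2 * Real.sqrt d / ρ)) ^ t * (q n : ℝ) ^ (-(t * d / s)))) := by
        intro n
        have hq0 : (0:ℝ) ≤ q n := Nat.cast_nonneg _
        have hcard : (Fintype.card (Fin d → Fin (2 * q n + 5)) : ℝ≥0∞) =
            ENNReal.ofReal ((2 * (q n : ℝ) + 5) ^ d) := by
          rw [Fintype.card_fun]
          simp only [Fintype.card_fin]
          rw [← ENNReal.ofReal_natCast ((2 * q n + 5) ^ d)]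
          congr 1
          push_cast; ring
        have hrpow : (ENNReal.ofReal (2 * (2 * Real.sqrt d / ρ) * r n)) ^ t =
            ENNReal.ofReal ((2 * (2 * Real.sqrt d / ρ)) ^ t * (q n : ℝ) ^ (-(t * d / s))) := by
          rw [ENNReal.ofReal_rpow_of_nonneg (mul_nonneg hC (hr0 n)) (by linarith)]
          congr 1
          rw [Real.mul_rpow hC (hr0 n)]
          congr 1
          rw [hrdef]
          dsimp only
          rw [← Real.rpow_mul hq0]
          congr 1
          ring
        rw [hcard, hrpow, ← ENNReal.ofReal_mul (by positivity)]
      refine Tendsto.congr (fun n => (heq n).symm) ?_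
      have := ENNReal.tendsto_ofReal hreal
      simpa using this
  refine ⟨hdim, fun hs1 => ?_⟩
  have h2 : dimH (distSet K E) < ((1 : ℝ≥0) : ℝ≥0∞) := by
    refine lt_of_le_of_lt hdim ?_
    simpa using ENNReal.ofReal_lt_one.mpr hs1
  have h3 : μH[((1 : ℝ≥0) : ℝ)] (distSet K E) = 0 := hausdorffMeasure_of_dimH_lt h2
  have h4 : (μH[(1:ℝ)] : Measure ℝ) = volume := MeasureTheory.hausdorffMeasure_real
  rw [← h4]
  simpa using h3

theorem stmt10 (d : ℕ) (hd : 0 < d) (s : ℝ) (hs0 : 0 < s) (hsd : s < d)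
    (q : ℕ → ℕ) (hq1 : 2 ≤ q 1) (hqpos : ∀ i, 0 < q i)
    (hqgrow : ∀ i : ℕ, 1 ≤ i → (q i : ℝ) ^ i ≤ q (i + 1))
    (E : Set (EuclideanSpace ℝ (Fin d)))
    (hEdef : E = ⋂ i ∈ Set.Ici 1, {x : EuclideanSpace ℝ (Fin d) |
      (∀ j, x j ∈ Set.Icc (0 : ℝ) 1) ∧
      ∀ j, ∃ p : ℤ, |x j - (p : ℝ) / q i| ≤ (q i : ℝ) ^ (-(d : ℝ) / s)}) :
    dimH E ≤ ENNReal.ofReal s ∧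
      ∀ K : Set (EuclideanSpace ℝ (Fin d)), Bornology.IsBounded K →
        Convex ℝ K → K = -K → (0 : EuclideanSpace ℝ (Fin d)) ∈ interior K →
        dimH (distSet K E) ≤ ENNReal.ofReal s ∧
          (s < 1 → volume (distSet K E) = 0) := by

  -- basic facts about q
  have hq2 : ∀ n, 1 ≤ n → 2 ≤ q n := by
    intro n hn
    induction n, hn using Nat.le_induction with
    | base => exact hq1
    | succ n hn ih =>
      have h1 : (q n : ℝ) ≤ (q n : ℝ) ^ n := by
        refine le_self_pow₀ ?_ (by omega)
        exact_mod_cast le_trans (by norm_num) ih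
      have h2 := hqgrow n hn
      have : (q n : ℝ) ≤ q (n + 1) := le_trans h1 h2
      exact le_trans ih (by exact_mod_cast this)
  have hqtop : Tendsto (fun n => (q n : ℝ)) atTop atTop := by
    have hpow : ∀ n, 1 ≤ n → (2 : ℝ) ^ (n - 1) ≤ q n := by
      intro n hn
      induction n, hn using Nat.le_induction with
      | base =>
        have : (2:ℝ) ≤ q 1 := by exact_mod_cast hq1
        simpa using le_trans one_le_two this
      | succ n hn ih =>
        have h2 := hqgrow n hn
        have h3 : (2 : ℝ) ^ n ≤ (q n : ℝ) ^ n := by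
          refine pow_le_pow_left₀ (by norm_num) ?_ n
          exact_mod_cast hq2 n hn
        have : (2:ℝ) ^ n ≤ q (n+1) := le_trans h3 h2
        simpa using this
    have hev : ∀ᶠ n in atTop, (fun n => (2:ℝ) ^ (n-1)) n ≤ (q n : ℝ) := by
      filter_upwards [eventually_ge_atTop 1] with n hn using hpow n hn
    exact tendsto_atTop_mono' atTop hev
      ((tendsto_pow_atTop_atTop_of_one_lt (by norm_num : (1:ℝ) < 2)).comp
        (tendsto_sub_atTop_nat 1))
  set r : ℕ → ℝ := fun n => (q n : ℝ) ^ (-(d : ℝ) / s) with hrdef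
  have hr0 : ∀ n, 0 ≤ r n := fun n => Real.rpow_nonneg (Nat.cast_nonneg _) _
  have hrtend : Tendsto r atTop (𝓝 0) := by
    have h1 : Tendsto (fun x : ℝ => x ^ (-((d:ℝ)/s))) atTop (𝓝 0) :=
      tendsto_rpow_neg_atTop (by positivity)
    have := h1.comp hqtop
    simpa [hrdef, neg_div, Function.comp_def] using this
  have hrq : ∀ n, 1 ≤ n → r n ≤ 1 / (q n : ℝ) := by
    intro n hn
    have h1 : (1:ℝ) ≤ q n := by exact_mod_cast le_trans one_le_two (hq2 n hn)
    have h2 : -(d : ℝ) / s ≤ -1 := by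
      rw [neg_div, neg_le_neg_iff, le_div_iff₀ hs0]
      linarith
    calc r n ≤ (q n : ℝ) ^ (-1 : ℝ) := Real.rpow_le_rpow_of_exponent_le h1 h2
      _ = 1 / (q n : ℝ) := by rw [Real.rpow_neg_one, one_div]
  have hE_sub : ∀ n, 1 ≤ n → ∀ x ∈ E, (∀ j, x j ∈ Set.Icc (0:ℝ) 1) ∧
      ∀ j, ∃ p : ℤ, |x j - (p : ℝ) / q n| ≤ r n := by
    intro n hn x hx
    rw [hEdef] at hx
    exact Set.mem_iInter₂.mp hx n hn
  have hlat : ∀ n, 1 ≤ n → ∀ x ∈ E, ∃ p : Fin d → ℤ,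
      (∀ j, |x j - (p j : ℝ) / q n| ≤ r n) ∧ ∀ j, -1 ≤ p j ∧ p j ≤ (q n : ℤ) + 1 := by
    intro n hn x hx
    obtain ⟨h1, h2⟩ := hE_sub n hn x hx
    choose p hp using h2
    refine ⟨p, hp, fun j => ?_⟩
    have hq0 : (0:ℝ) < q n := by exact_mod_cast hqpos n
    have hI := h1 j
    have hb := abs_le.mp (le_trans (hp j) (hrq n hn))
    have hx0 : (0:ℝ) ≤ x j := hI.1
    have hx1 : x j ≤ 1 := hI.2
    constructor
    · have hle : (-1 : ℝ) / q n ≤ (p j : ℝ) / q n := by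
        have : x j - 1 / q n ≤ (p j : ℝ) / q n := by linarith [hb.2]
        calc (-1:ℝ)/q n = 0 - 1/q n := by ring
          _ ≤ x j - 1/q n := by linarith
          _ ≤ _ := this
      have := (div_le_div_iff_of_pos_right hq0).mp hle
      exact_mod_cast this
    · have hle : (p j : ℝ) / q n ≤ ((q n : ℝ) + 1) / q n := by
        have h3 : (p j : ℝ) / q n ≤ x j + 1 / q n := by linarith [hb.1]
        have h4 : x j + 1/q n ≤ 1 + 1/q n := by linarith
        calc (p j : ℝ)/q n ≤ 1 + 1/q n := le_trans h3 h4
          _ = ((q n : ℝ) + 1)/q n := by field_simp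
      have := (div_le_div_iff_of_pos_right hq0).mp hle
      exact_mod_cast this
  -- the covering argument
  refine ⟨?_, fun K hKb hKc hKs hK0 =>
    distSet_aux d hd s hs0 hsd q hqpos E r hrdef hr0 hrtend hqtop hlat K hKc hKs hK0⟩
  refine dimH_le_of_covers E s hs0.le (fun n => Fin d → Fin (q n + 3))
    (fun n κ => {x : EuclideanSpace ℝ (Fin d) |
      ∀ j, |x j - (((κ j : ℕ) : ℝ) - 1) / q n| ≤ r n})
    (fun n => ENNReal.ofReal (2 * Real.sqrt d * r n)) ?_ ?_ ?_ ?_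
  · have : Tendsto (fun n => 2 * Real.sqrt d * r n) atTop (𝓝 0) := by
      simpa using hrtend.const_mul (2 * Real.sqrt d)
    have := ENNReal.tendsto_ofReal this
    simpa using this
  · filter_upwards with n
    intro κ
    exact box_diam _ _
  · filter_upwards [eventually_ge_atTop 1] with n hn
    intro x hx
    obtain ⟨p, hp, hpb⟩ := hlat n hn x hx
    refine Set.mem_iUnion.mpr ⟨fun j => ⟨(p j + 1).toNat, ?_⟩, fun j => ?_⟩
    · have h1 := (hpb j).1; have h2 := (hpb j).2
      omega
    · have h1 := (hpb j).1
      have : (((p j + 1).toNat : ℤ) : ℝ) = (p j : ℝ) + 1 := by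
        rw [Int.toNat_of_nonneg (by omega)]; push_cast; ring
      have h2 : ((((p j + 1).toNat : ℕ) : ℝ) - 1) = (p j : ℝ) := by
        push_cast at this ⊢; linarith
      rw [h2]
      exact hp j
  · intro t ht
    have hu : (d : ℝ) < t * d / s := by
      rw [lt_div_iff₀ hs0]
      have : (0:ℝ) < d := by exact_mod_cast hd
      nlinarith
    have hreal : Tendsto (fun n => (1 * (q n : ℝ) + 3) ^ d *
        ((2 * Real.sqrt d) ^ t * (q n : ℝ) ^ (-(t * d / s)))) atTop (𝓝 0) :=
      tendsto_poly_rpow _ hqtop d 1 3 _ _ hu (by positivity) one_pos (by norm_num)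
    have heq : ∀ n, (Fintype.card (Fin d → Fin (q n + 3)) : ℝ≥0∞) *
        (ENNReal.ofReal (2 * Real.sqrt d * r n)) ^ t =
        ENNReal.ofReal ((1 * (q n : ℝ) + 3) ^ d *
          ((2 * Real.sqrt d) ^ t * (q n : ℝ) ^ (-(t * d / s)))) := by
      intro n
      have hq0 : (0:ℝ) ≤ q n := Nat.cast_nonneg _
      have hcard : (Fintype.card (Fin d → Fin (q n + 3)) : ℝ≥0∞) =
          ENNReal.ofReal ((1 * (q n : ℝ) + 3) ^ d) := by
        rw [Fintype.card_fun]
        simp only [Fintype.card_fin, one_mul]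
        rw [← ENNReal.ofReal_natCast ((q n + 3) ^ d)]
        congr 1
        push_cast; ring
      have hrpow : (ENNReal.ofReal (2 * Real.sqrt d * r n)) ^ t =
          ENNReal.ofReal ((2 * Real.sqrt d) ^ t * (q n : ℝ) ^ (-(t * d / s))) := by
        rw [ENNReal.ofReal_rpow_of_nonneg (by positivity) (by linarith)]
        congr 1
        rw [Real.mul_rpow (by positivity) (hr0 n)]
        congr 1
        rw [hrdef]
        dsimp only
        rw [← Real.rpow_mul hq0]
        congr 1
        ring
      rw [hcard, hrpow, ← ENNReal.ofReal_mul (by positivity)]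
    refine Tendsto.congr (fun n => (heq n).symm) ?_
    have := ENNReal.tendsto_ofReal hreal
    simpa using this
end

section
/- Let m > 1 be an even integer and C_{2m} ⊆ [0,1] the set of numbers whose base-2m expansion uses only even digits. Let E = C_{2m} × C_{2m} ⊆ ℝ². Then the l^∞-distance set Δ_∞(E) = {max(|x₁−y₁|, |x₂−y₂|) : x, y ∈ E} has one-dimensional Lebesgue measure zero. -/
open MeasureTheory Set

/-- The set of numbers in `[0,1]` whose base-`2m` expansion uses only even digits. -/
def evenDigitSet (m : ℕ) : Set ℝ :=
  {x : ℝ | ∃ a : ℕ → ℕ, (∀ k, a k < m) ∧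
    x = ∑' k : ℕ, (2 * a k : ℝ) / (2 * m : ℝ) ^ (k + 1)}

open Pointwise ENNReal

def Dset (m : ℕ) : Set ℝ :=
  {x : ℝ | ∃ f : ℕ → ℤ, (∀ k, |f k| ≤ (m : ℤ) - 1) ∧
    x = ∑' k : ℕ, (2 * f k : ℝ) / (2 * m : ℝ) ^ (k + 1)}

lemma aux_summable (m : ℕ) (hm : 1 < m) (c : ℕ → ℝ) (hc : ∀ k, |c k| ≤ 2 * m) :
    Summable (fun k : ℕ => c k / (2 * m : ℝ) ^ (k + 1)) := by
  have hq : (1:ℝ) < 2 * m := by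
    have : (1:ℝ) ≤ (m:ℝ) := by exact_mod_cast hm.le
    nlinarith
  have hq0 : (0:ℝ) < 2 * m := by linarith
  apply Summable.of_norm_bounded (g := fun k : ℕ => ((2 * m : ℝ)⁻¹) ^ k)
  · exact summable_geometric_of_lt_one (by positivity) (by rw [inv_lt_one_iff₀]; right; exact hq)
  · intro k
    have hpow : (0:ℝ) < (2 * m : ℝ) ^ (k + 1) := by positivity
    rw [norm_div, Real.norm_eq_abs, Real.norm_eq_abs, abs_of_pos hpow]
    rw [div_le_iff₀ hpow]
    calc |c k| ≤ 2 * m := hc k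
      _ = ((2*m:ℝ)⁻¹)^k * (2*m:ℝ)^(k+1) := by
          rw [pow_succ']; field_simp
          rw [← mul_pow, one_div, inv_mul_cancel₀ (ne_of_gt (by linarith)), one_pow]

lemma Dset_summable (m : ℕ) (hm : 1 < m) (f : ℕ → ℤ) (hf : ∀ k, |f k| ≤ (m : ℤ) - 1) :
    Summable (fun k : ℕ => (2 * f k : ℝ) / (2 * m : ℝ) ^ (k + 1)) := by
  apply aux_summable m hm
  intro k
  have h := hf k
  have : |(f k : ℝ)| ≤ (m:ℝ) - 1 := by exact_mod_cast (abs_le.mpr (abs_le.mp h))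
  rw [abs_mul, abs_two]
  nlinarith [abs_nonneg (f k : ℝ)]

lemma sub_mem_Dset (m : ℕ) (hm : 1 < m) {x y : ℝ}
    (hx : x ∈ evenDigitSet m) (hy : y ∈ evenDigitSet m) : x - y ∈ Dset m := by
  obtain ⟨a, ha, rfl⟩ := hx
  obtain ⟨b, hb, rfl⟩ := hy
  refine ⟨fun k => (a k : ℤ) - b k, fun k => ?_, ?_⟩
  · show |(a k : ℤ) - b k| ≤ (m : ℤ) - 1
    rw [abs_le]
    have := ha k; have := hb k
    omega
  · have hsa : Summable (fun k : ℕ => (2 * a k : ℝ) / (2 * m : ℝ) ^ (k + 1)) := by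
      apply aux_summable m hm
      intro k
      rw [abs_of_nonneg (by positivity)]
      have : (a k : ℝ) < m := by exact_mod_cast ha k
      linarith
    have hsb : Summable (fun k : ℕ => (2 * b k : ℝ) / (2 * m : ℝ) ^ (k + 1)) := by
      apply aux_summable m hm
      intro k
      rw [abs_of_nonneg (by positivity)]
      have : (b k : ℝ) < m := by exact_mod_cast hb k
      linarith
    rw [← Summable.tsum_sub hsa hsb]
    congr 1
    ext k
    push_cast
    ring

lemma neg_mem_Dset (m : ℕ) {x : ℝ} (hx : x ∈ Dset m) : -x ∈ Dset m := by
  obtain ⟨f, hf, rfl⟩ := hx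
  refine ⟨fun k => -f k, fun k => by simpa using hf k, ?_⟩
  rw [← tsum_neg]
  congr 1; ext k; push_cast; ring

lemma Dset_bounded (m : ℕ) (hm : 1 < m) : Dset m ⊆ Icc (-2 : ℝ) 2 := by
  rintro x ⟨f, hf, rfl⟩
  have hq : (1:ℝ) < 2 * m := by
    have : (1:ℝ) ≤ (m:ℝ) := by exact_mod_cast hm.le
    nlinarith
  have hsum := Dset_summable m hm f hf
  have habs : ∀ k : ℕ, ‖(2 * f k : ℝ) / (2 * m : ℝ) ^ (k + 1)‖ ≤ ((2 * m : ℝ)⁻¹) ^ k := by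
    intro k
    have hpow : (0:ℝ) < (2 * m : ℝ) ^ (k + 1) := by positivity
    rw [Real.norm_eq_abs, abs_div, abs_of_pos hpow, div_le_iff₀ hpow]
    have h1 : |(f k : ℝ)| ≤ (m:ℝ) - 1 := by exact_mod_cast (abs_le.mpr (abs_le.mp (hf k)))
    have h2 : |(2 * f k : ℝ)| ≤ 2 * m := by
      rw [abs_mul, abs_two]; nlinarith [abs_nonneg (f k : ℝ)]
    calc |(2 * f k : ℝ)| ≤ 2 * m := h2
      _ = ((2*m:ℝ)⁻¹)^k * (2*m:ℝ)^(k+1) := by rw [pow_succ']; field_simp; rw [← mul_pow, one_div, inv_mul_cancel₀ (ne_of_gt (by linarith)), one_pow]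
  have hgeo : Summable (fun k : ℕ => ((2 * m : ℝ)⁻¹) ^ k) :=
    summable_geometric_of_lt_one (by positivity) (by rw [inv_lt_one_iff₀]; right; exact hq)
  have hb : ‖∑' k : ℕ, (2 * f k : ℝ) / (2 * m : ℝ) ^ (k + 1)‖ ≤ 2 := by
    calc ‖∑' k : ℕ, (2 * f k : ℝ) / (2 * m : ℝ) ^ (k + 1)‖
        ≤ ∑' k : ℕ, ‖(2 * f k : ℝ) / (2 * m : ℝ) ^ (k + 1)‖ := norm_tsum_le_tsum_norm hsum.norm
      _ ≤ ∑' k : ℕ, ((2 * m : ℝ)⁻¹) ^ k := Summable.tsum_le_tsum habs hsum.norm hgeo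
      _ = (1 - (2 * m : ℝ)⁻¹)⁻¹ := tsum_geometric_of_lt_one (by positivity)
            (by rw [inv_lt_one_iff₀]; right; exact hq)
      _ ≤ 2 := by
          have hm1 : (1:ℝ) ≤ (m:ℝ) := by exact_mod_cast hm.le
          rw [inv_le_comm₀ (by rw [sub_pos, inv_lt_one_iff₀]; right; exact hq) (by norm_num)]
          have h3 : (1:ℝ)/(2*m) ≤ 1/2 := by
            apply one_div_le_one_div_of_le <;> linarith
          rw [one_div] at h3
          linarith
  rw [Real.norm_eq_abs, abs_le] at hb
  exact ⟨hb.1, hb.2⟩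

lemma Dset_cover (m : ℕ) (hm : 1 < m) :
    Dset m ⊆ ⋃ j ∈ Finset.Icc (-(m:ℤ) + 1) ((m:ℤ) - 1),
      (fun x : ℝ => (2 * (j:ℝ) + x) / (2 * m)) '' Dset m := by
  rintro x ⟨f, hf, rfl⟩
  have hq0 : (0:ℝ) < 2 * m := by positivity
  have hsum := Dset_summable m hm f hf
  have hsum' := Dset_summable m hm (fun k => f (k + 1)) (fun k => hf (k + 1))
  refine mem_iUnion₂.mpr ⟨f 0, ?_, ?_⟩
  · rw [Finset.mem_Icc]
    have := abs_le.mp (hf 0)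
    omega
  · refine ⟨∑' k : ℕ, (2 * f (k + 1) : ℝ) / (2 * m : ℝ) ^ (k + 1),
      ⟨fun k => f (k + 1), fun k => hf (k + 1), rfl⟩, ?_⟩
    rw [Summable.tsum_eq_zero_add hsum]
    have h1 : ∑' k : ℕ, (2 * f (k + 1) : ℝ) / (2 * m : ℝ) ^ (k + 1 + 1)
        = (∑' k : ℕ, (2 * f (k + 1) : ℝ) / (2 * m : ℝ) ^ (k + 1)) * (2 * m : ℝ)⁻¹ := by
      rw [← tsum_mul_right]
      congr 1; ext k
      rw [pow_succ]
      field_simp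
    rw [h1]
    field_simp
    ring

lemma Dset_null (m : ℕ) (hm : 1 < m) : volume (Dset m) = 0 := by
  set a := volume (Dset m) with ha
  have hfin : a ≠ ⊤ := by
    refine ne_top_of_le_ne_top ?_ (measure_mono (Dset_bounded m hm))
    simp [Real.volume_Icc]
  have himg : ∀ j : ℤ, volume ((fun x : ℝ => (2 * (j:ℝ) + x) / (2 * m)) '' Dset m)
      = ENNReal.ofReal ((2 * m : ℝ)⁻¹) * a := by
    intro j
    have hq0 : (0:ℝ) < 2 * m := by positivity
    have heq : (fun x : ℝ => (2 * (j:ℝ) + x) / (2 * m)) '' Dset m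
        = (2 * (j:ℝ) / (2 * m)) +ᵥ ((2 * m : ℝ)⁻¹ • Dset m) := by
      ext z
      simp only [mem_image, Set.mem_vadd_set, mem_smul_set]
      constructor
      · rintro ⟨x, hx, rfl⟩
        exact ⟨(2 * m : ℝ)⁻¹ * x, ⟨x, hx, rfl⟩, by rw [vadd_eq_add]; field_simp⟩
      · rintro ⟨_, ⟨x, hx, rfl⟩, rfl⟩
        exact ⟨x, hx, by simp only [vadd_eq_add, smul_eq_mul]; field_simp⟩
    rw [heq, measure_vadd, Measure.addHaar_smul]
    congr 1
    rw [Module.finrank_self, pow_one, abs_of_pos (by positivity)]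
  have hcard : (Finset.Icc (-(m:ℤ) + 1) ((m:ℤ) - 1)).card = 2 * m - 1 := by
    rw [Int.card_Icc]
    omega
  have hle : a ≤ (2 * m - 1 : ℕ) * (ENNReal.ofReal ((2 * m : ℝ)⁻¹) * a) := by
    calc a ≤ volume (⋃ j ∈ Finset.Icc (-(m:ℤ) + 1) ((m:ℤ) - 1),
          (fun x : ℝ => (2 * (j:ℝ) + x) / (2 * m)) '' Dset m) :=
        measure_mono (Dset_cover m hm)
      _ ≤ ∑ j ∈ Finset.Icc (-(m:ℤ) + 1) ((m:ℤ) - 1),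
          volume ((fun x : ℝ => (2 * (j:ℝ) + x) / (2 * m)) '' Dset m) :=
        measure_biUnion_finset_le _ _
      _ = (2 * m - 1 : ℕ) * (ENNReal.ofReal ((2 * m : ℝ)⁻¹) * a) := by
        rw [Finset.sum_congr rfl (fun j _ => himg j), Finset.sum_const, hcard, nsmul_eq_mul]
  have hc : ((2 * m - 1 : ℕ) : ℝ≥0∞) * ENNReal.ofReal ((2 * m : ℝ)⁻¹) < 1 := by
    have hq0 : (0:ℝ) < 2 * m := by positivity
    rw [← ENNReal.ofReal_natCast, ← ENNReal.ofReal_mul (by positivity)]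
    rw [← ENNReal.ofReal_one]
    apply ENNReal.ofReal_lt_ofReal_iff_of_nonneg (by positivity) |>.mpr
    rw [mul_inv_lt_iff₀ hq0, one_mul]
    have : ((2 * m - 1 : ℕ) : ℝ) = 2 * m - 1 := by
      push_cast [Nat.cast_sub (by omega : 1 ≤ 2 * m)]
      ring
    rw [this]; linarith
  by_contra h0
  have : a < a := by
    calc a ≤ ((2 * m - 1 : ℕ) : ℝ≥0∞) * ENNReal.ofReal ((2 * m : ℝ)⁻¹) * a := by
          rw [mul_assoc]; exact hle
      _ < 1 * a := ENNReal.mul_lt_mul_left h0 hfin hc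
      _ = a := one_mul a
  exact lt_irrefl _ this

lemma abs_sub_mem_Dset (m : ℕ) (hm : 1 < m) {x y : ℝ}
    (hx : x ∈ evenDigitSet m) (hy : y ∈ evenDigitSet m) : |x - y| ∈ Dset m := by
  rcases abs_choice (x - y) with h | h
  · rw [h]; exact sub_mem_Dset m hm hx hy
  · rw [h]; exact neg_mem_Dset m (sub_mem_Dset m hm hx hy)

theorem stmt15 (m : ℕ) (hm : 1 < m) (hme : Even m) :
    volume {r : ℝ | ∃ x₁ ∈ evenDigitSet m, ∃ x₂ ∈ evenDigitSet m,
      ∃ y₁ ∈ evenDigitSet m, ∃ y₂ ∈ evenDigitSet m,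
      r = max |x₁ - y₁| |x₂ - y₂|} = 0 := by
  apply measure_mono_null _ (Dset_null m hm)
  rintro r ⟨x₁, hx₁, x₂, hx₂, y₁, hy₁, y₂, hy₂, rfl⟩
  rcases max_choice |x₁ - y₁| |x₂ - y₂| with h | h
  · rw [h]; exact abs_sub_mem_Dset m hm hx₁ hy₁
  · rw [h]; exact abs_sub_mem_Dset m hm hx₂ hy₂
end
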